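/- Let (W, S) be a Coxeter system and let T, T' ⊆ S. If w, w' ∈ W satisfy wW_T ⊆ w'W_{T'} for the standard parabolic subgroups W_T = ⟨T⟩ and W_{T'} = ⟨T'⟩, then T ⊆ T' and w⁻¹w' ∈ W_{T'}. -/

import Mathlib

/-!
From `w W_T ⊆ w' W_{T'}` one gets `w⁻¹ w' ∈ W_{T'}`, hence `w W_{T'} = w' W_{T'}` and
`W_T ≤ W_{T'}`; it remains to see that `s_t ∈ W_{T'}` forces `t ∈ T'`. For this, let `W` act on
`⊕_b ℝ α_b` by its geometric representation: every `s_b` with `b ≠ t` leaves the `α_t`-coordinate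
unchanged, whereas `s_t α_t = -α_t`. The Coxeter relations hold because two reflections whose
roots make the angle `π - π / m` generate a dihedral group of order `2m`, which is read off from
the Chebyshev formula for the powers of their product.
-/

open Polynomial Polynomial.Chebyshev Real

lemma Polynomial.Chebyshev.S_eval_two_mul_cos_eq_zero {φ : ℝ} (hφ : sin φ ≠ 0) {k : ℤ}
    (hk : sin ((k + 1) * φ) = 0) : (S ℝ k).eval (2 * cos φ) = 0 := by
  have h := S_two_mul_real_cos φ k
  rw [hk] at h
  exact (mul_eq_zero.1 h).resolve_right hφ

lemma Polynomial.Chebyshev.S_add_S_sub_one_eval_two_mul_cos_eq_zero {φ : ℝ} (hφ : sin φ ≠ 0)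
    {k : ℤ} (hk : (2 * k + 1) * φ = 2 * π) :
    (S ℝ k).eval (2 * cos φ) + (S ℝ (k - 1)).eval (2 * cos φ) = 0 := by
  refine (mul_eq_zero.1 ?_).resolve_right hφ
  have hsin : sin ((k + 1) * φ) = - sin (k * φ) := by
    rw [show (k + 1) * φ = 2 * π - k * φ by linear_combination hk, sin_two_pi_sub]
  rw [add_mul, S_two_mul_real_cos, S_two_mul_real_cos, hsin]
  push_cast
  ring_nf

/-- The two coefficients in `Module.reflection_mul_reflection_pow_apply` vanish when
`f y * g x - 2 = 2 cos (2π / m)`. -/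
lemma Module.reflection_mul_reflection_pow_coeffs_eq_zero {m : ℕ} (hm : 3 ≤ m) :
    (S ℝ ((m - 2) / 2)).eval (2 * cos (2 * π / m)) *
        ((S ℝ ((m - 1) / 2)).eval (2 * cos (2 * π / m)) +
          (S ℝ ((m - 3) / 2)).eval (2 * cos (2 * π / m))) = 0 ∧
      (S ℝ ((m - 1) / 2)).eval (2 * cos (2 * π / m)) *
        ((S ℝ (m / 2)).eval (2 * cos (2 * π / m)) +
          (S ℝ ((m - 2) / 2)).eval (2 * cos (2 * π / m))) = 0 := by
  have hm0 : (0 : ℝ) < m := by positivity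
  have hsin : sin (2 * π / m) ≠ 0 := by
    refine (sin_pos_of_pos_of_lt_pi (by positivity) ?_).ne'
    rw [div_lt_iff₀ hm0]
    have hm3 : (3 : ℝ) ≤ m := by exact_mod_cast hm
    nlinarith [pi_pos]
  obtain ⟨k, rfl | rfl⟩ := Nat.even_or_odd' m
  · have hk : (k : ℝ) ≠ 0 := by exact_mod_cast (by omega : k ≠ 0)
    have h1 : ((2 * k : ℕ) - 2 : ℤ) / 2 = k - 1 := by omega
    have h2 : ((2 * k : ℕ) - 1 : ℤ) / 2 = k - 1 := by omega
    have hS : (S ℝ (k - 1)).eval (2 * cos (2 * π / (2 * k : ℕ))) = 0 := by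
      refine S_eval_two_mul_cos_eq_zero hsin ?_
      rw [show ((k - 1 : ℤ) + 1 : ℝ) * (2 * π / (2 * k : ℕ)) = π by
        push_cast; field_simp; ring]
      exact sin_pi
    rw [h1, h2, hS]
    simp
  · have h1 : ((2 * k + 1 : ℕ) - 2 : ℤ) / 2 = k - 1 := by omega
    have h2 : ((2 * k + 1 : ℕ) - 1 : ℤ) / 2 = k := by omega
    have h3 : ((2 * k + 1 : ℕ) - 3 : ℤ) / 2 = k - 1 := by omega
    have h4 : ((2 * k + 1 : ℕ) : ℤ) / 2 = k := by omega
    have hS := S_add_S_sub_one_eval_two_mul_cos_eq_zero hsin (k := k) (by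
      push_cast; field_simp)
    rw [h1, h2, h3, h4, hS]
    simp

lemma Module.reflection_mul_reflection_pow_eq_one {V : Type*} [AddCommGroup V] [Module ℝ V]
    {x y : V} {f g : Module.Dual ℝ V} (hf : f x = 2) (hg : g y = 2) {m : ℕ} (hm : 2 ≤ m)
    (hfy : f y = -2 * cos (π / m)) (hgx : g x = -2 * cos (π / m)) :
    (reflection hf * reflection hg) ^ m = 1 := by
  ext z
  rw [LinearEquiv.coe_one, id]
  rcases hm.eq_or_lt with rfl | hm3
  · have hcos : cos (π / (2 : ℕ)) = 0 := by simp
    rw [hcos, mul_zero] at hfy hgx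
    simp only [pow_two, LinearEquiv.mul_apply, reflection_apply, map_sub, map_smul, hf, hg, hfy,
      hgx]
    module
  · have ht : 2 * cos (2 * π / m) = f y * g x - 2 := by
      rw [hfy, hgx, mul_div_assoc, cos_two_mul]
      ring
    obtain ⟨hA, hB⟩ := reflection_mul_reflection_pow_coeffs_eq_zero hm3
    rw [reflection_mul_reflection_pow_apply hf hg m z _ ht, hA, hB, zero_smul, zero_smul,
      add_zero, add_zero]

namespace CoxeterMatrix

variable {B : Type*} (M : CoxeterMatrix B)

/-- Twice `⟨α_b, ·⟩` for the bilinear form `⟨α_b, α_b'⟩ = -cos (π / M b b')`. Since `π / 0 = 0`, an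
entry `M b b' = 0` (no relation) gives the right value `-2 cos (π / ∞) = -2`. -/
noncomputable def rootForm (b : B) : Module.Dual ℝ (B →₀ ℝ) :=
  Finsupp.linearCombination ℝ fun b' => -2 * cos (π / M b b')

lemma rootForm_single (b b' : B) :
    M.rootForm b (Finsupp.single b' 1) = -2 * cos (π / M b b') := by
  simp [rootForm]

lemma rootForm_single_self (b : B) : M.rootForm b (Finsupp.single b 1) = 2 := by
  simp [rootForm_single]

noncomputable def simpleReflection (b : B) : (B →₀ ℝ) ≃ₗ[ℝ] (B →₀ ℝ) :=
  Module.reflection (M.rootForm_single_self b)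

lemma simpleReflection_apply_of_ne {b b' : B} (h : b ≠ b') (v : B →₀ ℝ) :
    M.simpleReflection b v b' = v b' := by
  simp [simpleReflection, Module.reflection_apply, h]

lemma simpleReflection_single_self (b : B) :
    M.simpleReflection b (Finsupp.single b 1) = -Finsupp.single b 1 :=
  Module.reflection_apply_self _

lemma isLiftable_simpleReflection : M.IsLiftable M.simpleReflection := by
  intro i j
  rcases eq_or_ne i j with rfl | hij
  · rw [M.diagonal, pow_one]
    exact LinearEquiv.ext (Module.involutive_reflection (M.rootForm_single_self i))
  obtain hm | hm := (M i j).eq_zero_or_pos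
  · rw [hm, pow_zero]
  · have hm2 : 2 ≤ M i j := by
      have := M.off_diagonal i j hij
      omega
    exact Module.reflection_mul_reflection_pow_eq_one _ _ hm2 (M.rootForm_single i j)
      (by rw [M.rootForm_single, M.symmetric])

end CoxeterMatrix

namespace CoxeterSystem

variable {B W : Type*} [Group W] {M : CoxeterMatrix B} (cs : CoxeterSystem M W)

noncomputable def geometricRepresentation : W →* (B →₀ ℝ) ≃ₗ[ℝ] (B →₀ ℝ) :=
  cs.lift ⟨M.simpleReflection, M.isLiftable_simpleReflection⟩

lemma geometricRepresentation_simple (b : B) :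
    cs.geometricRepresentation (cs.simple b) = M.simpleReflection b :=
  cs.lift_apply_simple _ b

lemma geometricRepresentation_apply_apply_of_mem_closure {T : Set B} {t : B} (ht : t ∉ T) {u : W}
    (hu : u ∈ Subgroup.closure (cs.simple '' T)) (v : B →₀ ℝ) :
    cs.geometricRepresentation u v t = v t := by
  induction hu using Subgroup.closure_induction'' generalizing v with
  | mem _ hg | inv_mem _ hg =>
    obtain ⟨b, hb, rfl⟩ := hg
    simp only [inv_simple, geometricRepresentation_simple,
      M.simpleReflection_apply_of_ne (ne_of_mem_of_not_mem hb ht)]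
  | one => rw [map_one, LinearEquiv.coe_one, id]
  | mul g g' _ _ hg hg' => rw [map_mul, LinearEquiv.mul_apply, hg, hg']

theorem simple_mem_closure_simple_image_iff {T : Set B} {t : B} :
    cs.simple t ∈ Subgroup.closure (cs.simple '' T) ↔ t ∈ T := by
  refine ⟨fun h => by_contra fun ht => ?_, fun ht => Subgroup.subset_closure ⟨t, ht, rfl⟩⟩
  have := cs.geometricRepresentation_apply_apply_of_mem_closure ht h (Finsupp.single t 1)
  rw [geometricRepresentation_simple, M.simpleReflection_single_self] at this
  norm_num at this

theorem closure_simple_image_le_iff {T T' : Set B} :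
    Subgroup.closure (cs.simple '' T) ≤ Subgroup.closure (cs.simple '' T') ↔ T ⊆ T' :=
  ⟨fun h t ht =>
    cs.simple_mem_closure_simple_image_iff.1 (h (Subgroup.subset_closure ⟨t, ht, rfl⟩)),
    fun h => Subgroup.closure_mono (Set.image_mono h)⟩

end CoxeterSystem

open Pointwise

theorem Subgroup.le_and_inv_mul_mem_of_leftCoset_subset {G : Type*} [Group G] {H K : Subgroup G}
    {a b : G} (h : a • (H : Set G) ⊆ b • (K : Set G)) : H ≤ K ∧ a⁻¹ * b ∈ K := by
  have hba : b⁻¹ * a ∈ K :=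
    (mem_leftCoset_iff b).1 (h ((mem_leftCoset_iff a).2 (by simp)))
  have hab : a⁻¹ * b ∈ K := by simpa using K.inv_mem hba
  rw [← (leftCoset_eq_iff K).2 hab, Set.smul_set_subset_smul_set_iff] at h
  exact ⟨h, hab⟩

theorem stmt_11 {B W : Type*} [Group W] (M : CoxeterMatrix B)
    (cs : CoxeterSystem M W) (T T' : Set B) (w w' : W)
    (h : w • ((Subgroup.closure (cs.simple '' T) : Subgroup W) : Set W) ⊆
         w' • ((Subgroup.closure (cs.simple '' T') : Subgroup W) : Set W)) :
    T ⊆ T' ∧ w⁻¹ * w' ∈ Subgroup.closure (cs.simple '' T') := by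
  obtain ⟨hle, hmem⟩ := Subgroup.le_and_inv_mul_mem_of_leftCoset_subset h
  exact ⟨cs.closure_simple_image_le_iff.1 hle, hmem⟩
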